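/- There exists a constant C > 0 such that for every integer k ≥ 1 the constant c_k satisfies |c_k − k·Σ_{i=1}^k 1/i| ≤ (C/k)·(k·Σ_{i=1}^k 1/i); that is, c_k = (1 + O(1/k))·k·Σ_{i=1}^k 1/i as k → ∞. -/

import Mathlib

open Filter Real Topology

/-- The formal exponential of a power series (intended for series with zero
constant coefficient, in which case for each `d` only finitely many `i` give a
nonzero contribution `coeff d (A ^ i) / i!`). -/
noncomputable def formalExp (A : PowerSeries ℝ) : PowerSeries ℝ :=
  PowerSeries.mk fun d => ∑ᶠ i : ℕ, PowerSeries.coeff d (A ^ i) / (Nat.factorial i : ℝ)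

/-- The formal power series `c • ∑_{i ≥ 1} B(z^i)/i`, where `B` is the power series
with coefficients `b`. -/
noncomputable def diagSum (c : ℝ) (b : ℕ → ℝ) : PowerSeries ℝ :=
  PowerSeries.mk fun d => ∑ᶠ i ∈ {i : ℕ | 1 ≤ i}, (c * if i ∣ d then b (d / i) else 0) / (i : ℝ)

/-- The defining functional equation `B̄_k(z) = z · exp(k · ∑_{i ≥ 1} B̄_k(z^i)/i)`
for the formal power series `B̄_k` with coefficient sequence `b`. -/
def KTreeSeriesEq (k : ℕ) (b : ℕ → ℝ) : Prop :=
  PowerSeries.mk b = PowerSeries.X * formalExp (diagSum (k : ℝ) b)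

/-- `ρ` is the radius of convergence of the power series with (nonnegative)
coefficients `b`. -/
def IsRadius (b : ℕ → ℝ) (ρ : ℝ) : Prop :=
  (∀ x : ℝ, 0 ≤ x → x < ρ → Summable fun n => b n * x ^ n) ∧
  (∀ x : ℝ, ρ < x → ¬ Summable fun n => b n * x ^ n)

/-- `∑_{i ≥ 2} B̄_k'(ρ^i) · ρ^i`, written via `B̄'(y)·y = ∑_n n·b_n·y^n`. -/
noncomputable def sTail (b : ℕ → ℝ) (ρ : ℝ) : ℝ :=
  ∑' i : ℕ, ∑' n : ℕ, (n : ℝ) * b n * (ρ ^ (i + 2)) ^ n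

/-- The scaling constant `c_k = k (∑_{i=1}^k 1/i) √(1 + k ∑_{i≥2} B̄_k'(ρ^i) ρ^i)`. -/
noncomputable def cConst (k : ℕ) (b : ℕ → ℝ) (ρ : ℝ) : ℝ :=
  (k : ℝ) * (∑ i ∈ Finset.range k, (1 : ℝ) / (i + 1)) * Real.sqrt (1 + k * sTail b ρ)

/-! The coefficients `bₙ` of `B̄_k` satisfy `bₙ₊ₘ₊₁ ≥ (k bₙ)(k bₘ)/2`, from the quadratic term
of the exponential. Hence `wₙ = k²/2 · bₙ xⁿ⁺¹` satisfies `wₙ wₘ ≤ wₙ₊ₘ₊₁`, and since `bₙ xⁿ → 0`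
for `x < ρ` this forces `wₙ ≤ 1`, i.e. `bₙ ρⁿ ≤ 2/(k²ρ)`. Fed into the tail sum this gives
`k² ∑_{i≥2} B̄_k'(ρ^i) ρ^i ≤ 2/(1-ρ)³`, while `b₂ = k` forces `ρ ≤ 1/2` once `k ≥ 3`. So the
argument of the square root in `c_k` is `1 + O(1/k)`, and `√(1+t) ≤ 1 + t/2`. -/

open PowerSeries

lemma coeff_pow_nonneg {R : Type*} [CommSemiring R] [PartialOrder R] [IsOrderedRing R]
    {A : R⟦X⟧} (hA : ∀ d, 0 ≤ coeff d A) (i d : ℕ) :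
    0 ≤ coeff d (A ^ i) := by
  induction i generalizing d with
  | zero =>
    rw [pow_zero, coeff_one]
    split_ifs <;> simp
  | succ i ih =>
    rw [pow_succ, coeff_mul]
    exact Finset.sum_nonneg fun p _ => mul_nonneg (ih p.1) (hA p.2)

lemma coeff_formalExp {A : ℝ⟦X⟧} (hA : constantCoeff A = 0) (d : ℕ) :
    coeff d (formalExp A) =
      ∑ i ∈ Finset.range (d + 1), coeff d (A ^ i) / (Nat.factorial i : ℝ) := by
  rw [formalExp, coeff_mk]
  refine finsum_eq_sum_of_support_subset _ fun i hi => ?_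
  by_contra hid
  have hXi : (X : ℝ⟦X⟧) ^ i ∣ A ^ i :=
    pow_dvd_pow_of_dvd (X_dvd_iff.mpr hA) i
  simp_all [X_pow_dvd_iff.mp hXi d (by simpa using hid)]

lemma coeff_pow_div_factorial_le_coeff_formalExp {A : ℝ⟦X⟧}
    (hA0 : constantCoeff A = 0) (hA : ∀ d, 0 ≤ coeff d A) (i d : ℕ) :
    coeff d (A ^ i) / (Nat.factorial i : ℝ) ≤ coeff d (formalExp A) := by
  have hterm (j : ℕ) : 0 ≤ coeff d (A ^ j) / (Nat.factorial j : ℝ) :=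
    div_nonneg (coeff_pow_nonneg hA j d) (Nat.cast_nonneg _)
  rw [coeff_formalExp hA0]
  by_cases hid : i ≤ d
  · exact Finset.single_le_sum (fun j _ => hterm j) (Finset.mem_range.mpr (by omega))
  · have hXi : (X : ℝ⟦X⟧) ^ i ∣ A ^ i :=
      pow_dvd_pow_of_dvd (X_dvd_iff.mpr hA0) i
    rw [X_pow_dvd_iff.mp hXi d (by omega), zero_div]
    exact Finset.sum_nonneg fun j _ => hterm j

section diagSum

variable {c : ℝ} {b : ℕ → ℝ}

lemma coeff_zero_diagSum (hb0 : b 0 = 0) : coeff 0 (diagSum c b) = 0 := by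
  rw [diagSum, coeff_mk]
  exact finsum_mem_eq_zero_of_forall_eq_zero fun i _ => by simp [hb0]

lemma constantCoeff_diagSum (hb0 : b 0 = 0) : constantCoeff (diagSum c b) = 0 := by
  rw [← coeff_zero_eq_constantCoeff_apply, coeff_zero_diagSum hb0]

lemma coeff_diagSum {d : ℕ} (hd : d ≠ 0) :
    coeff d (diagSum c b) = ∑ i ∈ d.divisors, c * b (d / i) / i := by
  rw [diagSum, coeff_mk, finsum_mem_eq_sum_of_subset (t := d.divisors)]
  · exact Finset.sum_congr rfl fun i hi => by rw [if_pos (Nat.mem_divisors.mp hi).1]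
  · rintro i ⟨-, hi⟩
    by_contra hid
    simp_all [Nat.mem_divisors]
  · intro i hi
    exact Nat.pos_of_dvd_of_pos (Nat.mem_divisors.mp hi).1 (Nat.pos_of_ne_zero hd)

lemma coeff_diagSum_nonneg (hc : 0 ≤ c) (hb0 : b 0 = 0) (hb : ∀ n, 0 ≤ b n) (d : ℕ) :
    0 ≤ coeff d (diagSum c b) := by
  rcases eq_or_ne d 0 with rfl | hd
  · rw [coeff_zero_diagSum hb0]
  · rw [coeff_diagSum hd]
    exact Finset.sum_nonneg fun i _ => div_nonneg (mul_nonneg hc (hb _)) (Nat.cast_nonneg _)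

lemma mul_le_coeff_diagSum (hc : 0 ≤ c) (hb0 : b 0 = 0) (hb : ∀ n, 0 ≤ b n) (d : ℕ) :
    c * b d ≤ coeff d (diagSum c b) := by
  rcases eq_or_ne d 0 with rfl | hd
  · rw [coeff_zero_diagSum hb0, hb0, mul_zero]
  · rw [coeff_diagSum hd]
    calc c * b d = c * b (d / 1) / (1 : ℕ) := by simp
      _ ≤ ∑ i ∈ d.divisors, c * b (d / i) / i :=
        Finset.single_le_sum (f := fun i : ℕ => c * b (d / i) / i)
          (fun i _ => div_nonneg (mul_nonneg hc (hb _)) (Nat.cast_nonneg _))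
          (Nat.one_mem_divisors.mpr hd)

end diagSum

namespace KTreeSeriesEq

variable {k : ℕ} {b : ℕ → ℝ}

lemma coeff_succ (heq : KTreeSeriesEq k b) (n : ℕ) :
    b (n + 1) = coeff n (formalExp (diagSum k b)) := by
  simpa [coeff_succ_X_mul] using congrArg (coeff (n + 1)) heq

lemma coeff_two (heq : KTreeSeriesEq k b) (hb0 : b 0 = 0) : b 2 = k := by
  have hb1 : b 1 = 1 := by
    rw [heq.coeff_succ, coeff_formalExp (constantCoeff_diagSum hb0)]
    simp
  rw [heq.coeff_succ, coeff_formalExp (constantCoeff_diagSum hb0), Finset.sum_range_succ,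
    Finset.sum_range_one, pow_zero, pow_one, coeff_diagSum one_ne_zero]
  simp [hb1]

lemma mul_mul_div_two_le (heq : KTreeSeriesEq k b) (hb0 : b 0 = 0) (hb : ∀ n, 0 ≤ b n)
    (n m : ℕ) : k * b n * (k * b m) / 2 ≤ b (n + m + 1) := by
  have hk : (0 : ℝ) ≤ k := Nat.cast_nonneg k
  set A := diagSum k b
  have hA : ∀ d, 0 ≤ coeff d A := coeff_diagSum_nonneg hk hb0 hb
  have hsq : coeff n A * coeff m A ≤ coeff (n + m) (A ^ 2) := by
    rw [sq, coeff_mul]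
    exact Finset.single_le_sum (f := fun p => coeff p.1 A * coeff p.2 A)
      (fun p _ => mul_nonneg (hA p.1) (hA p.2))
      (a := (n, m)) (Finset.HasAntidiagonal.mem_antidiagonal.mpr rfl)
  have hprod : k * b n * (k * b m) ≤ coeff n A * coeff m A :=
    mul_le_mul (mul_le_coeff_diagSum hk hb0 hb n) (mul_le_coeff_diagSum hk hb0 hb m)
      (mul_nonneg hk (hb m)) (hA n)
  have hexp := coeff_pow_div_factorial_le_coeff_formalExp (constantCoeff_diagSum hb0) hA 2 (n + m)
  rw [heq.coeff_succ]
  norm_num at hexp ⊢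
  linarith

end KTreeSeriesEq

lemma le_one_of_mul_le_add_succ {w : ℕ → ℝ} (hw : ∀ n, 0 ≤ w n)
    (hmul : ∀ n m, w n * w m ≤ w (n + m + 1)) (hlim : Tendsto w atTop (𝓝 0)) (N : ℕ) :
    w N ≤ 1 := by
  by_contra! hN
  have hsub (j : ℕ) : w N ≤ w ((N + 1) * j + N) := by
    induction j with
    | zero => simp
    | succ j ih =>
      calc w N ≤ w ((N + 1) * j + N) * w N := le_mul_of_one_le_left (hw N) (ih.trans' hN.le)
        _ ≤ w ((N + 1) * j + N + N + 1) := hmul _ _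
        _ = w ((N + 1) * (j + 1) + N) := by ring_nf
  have hto : Tendsto (fun j => w ((N + 1) * j + N)) atTop (𝓝 0) :=
    hlim.comp (tendsto_atTop_mono (fun j => show j ≤ (N + 1) * j + N by nlinarith) tendsto_id)
  obtain ⟨j, hj⟩ := (hto.eventually (eventually_lt_nhds (zero_lt_one.trans hN))).exists
  exact (hsub j).not_gt hj

lemma KTreeSeriesEq.sq_div_two_mul_mul_pow_le_one {k : ℕ} {b : ℕ → ℝ} {ρ : ℝ}
    (heq : KTreeSeriesEq k b) (hb0 : b 0 = 0) (hb : ∀ n, 0 ≤ b n) (hρ : 0 < ρ)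
    (hsum : ∀ x, 0 ≤ x → x < ρ → Summable fun n => b n * x ^ n) (n : ℕ) :
    (k : ℝ) ^ 2 / 2 * b n * ρ ^ (n + 1) ≤ 1 := by
  have hlt : ∀ x ∈ Set.Ioo 0 ρ, (k : ℝ) ^ 2 / 2 * b n * x ^ (n + 1) ≤ 1 := by
    rintro x ⟨hx0, hxρ⟩
    refine le_one_of_mul_le_add_succ (w := fun n => (k : ℝ) ^ 2 / 2 * b n * x ^ (n + 1))
      (fun n => by have := hb n; positivity) (fun n m => ?_) ?_ n
    · have hnm := heq.mul_mul_div_two_le hb0 hb n m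
      calc (k : ℝ) ^ 2 / 2 * b n * x ^ (n + 1) * ((k : ℝ) ^ 2 / 2 * b m * x ^ (m + 1))
          = (k : ℝ) ^ 2 / 2 * (k * b n * (k * b m) / 2) * x ^ (n + m + 1 + 1) := by ring
        _ ≤ (k : ℝ) ^ 2 / 2 * b (n + m + 1) * x ^ (n + m + 1 + 1) := by gcongr
    · have := (hsum x hx0.le hxρ).tendsto_atTop_zero.const_mul ((k : ℝ) ^ 2 / 2 * x)
      rw [mul_zero] at this
      exact this.congr fun n => by ring
  have hcont : Tendsto (fun x : ℝ => (k : ℝ) ^ 2 / 2 * b n * x ^ (n + 1)) (𝓝[<] ρ)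
      (𝓝 ((k : ℝ) ^ 2 / 2 * b n * ρ ^ (n + 1))) :=
    ((continuous_const.mul (continuous_pow _)).tendsto ρ).mono_left nhdsWithin_le_nhds
  exact le_of_tendsto hcont (eventually_of_mem (Ioo_mem_nhdsLT hρ) hlt)

lemma tsum_coe_mul_mul_pow_le {a : ℕ → ℝ} {c q : ℝ} (ha : ∀ n, 0 ≤ a n) (hac : ∀ n, a n ≤ c)
    (hq0 : 0 ≤ q) (hq1 : q < 1) : ∑' n : ℕ, n * a n * q ^ n ≤ c * (q / (1 - q) ^ 2) := by
  have hq : ‖q‖ < 1 := by rwa [Real.norm_of_nonneg hq0]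
  have hdom (n : ℕ) : n * a n * q ^ n ≤ c * (n * q ^ n) := by
    have := hac n
    have : 0 ≤ (n : ℝ) * q ^ n := by positivity
    nlinarith
  have hsum : Summable fun n : ℕ => c * (n * q ^ n) :=
    (hasSum_coe_mul_geometric_of_norm_lt_one hq).summable.mul_left c
  calc ∑' n : ℕ, n * a n * q ^ n ≤ ∑' n : ℕ, c * (n * q ^ n) :=
        (hsum.of_nonneg_of_le (fun n => by have := ha n; positivity) hdom).tsum_le_tsum hdom hsum
    _ = c * (q / (1 - q) ^ 2) := by rw [tsum_mul_left, tsum_coe_mul_geometric_of_norm_lt_one hq]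

lemma sTail_nonneg {b : ℕ → ℝ} {ρ : ℝ} (hb : ∀ n, 0 ≤ b n) (hρ : 0 ≤ ρ) : 0 ≤ sTail b ρ :=
  tsum_nonneg fun i => tsum_nonneg fun n => by have := hb n; positivity

/-- Writing `(ρ^(i+2))ⁿ = ρⁿ (ρ^(i+1))ⁿ`, the `i`-th inner series is at most
`c ρ^(i+1)/(1-ρ)²`, a geometric series in `i`. -/
lemma sTail_le {b : ℕ → ℝ} {ρ c : ℝ} (hb : ∀ n, 0 ≤ b n) (hρ0 : 0 ≤ ρ) (hρ1 : ρ < 1)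
    (hc : ∀ n, b n * ρ ^ n ≤ c) : sTail b ρ ≤ c * ρ / (1 - ρ) ^ 3 := by
  have hc0 : 0 ≤ c := (mul_nonneg (hb 0) (pow_nonneg hρ0 0)).trans (hc 0)
  set G : ℕ → ℝ := fun i => c * ρ / (1 - ρ) ^ 2 * ρ ^ i
  have hinner (i : ℕ) : ∑' n : ℕ, n * b n * (ρ ^ (i + 2)) ^ n ≤ G i := by
    have hq1 : ρ ^ (i + 1) < 1 := pow_lt_one₀ hρ0 hρ1 (Nat.succ_ne_zero i)
    have hqρ : ρ ^ (i + 1) ≤ ρ := pow_le_of_le_one hρ0 hρ1.le (Nat.succ_ne_zero i)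
    calc ∑' n : ℕ, n * b n * (ρ ^ (i + 2)) ^ n
        = ∑' n : ℕ, n * (b n * ρ ^ n) * (ρ ^ (i + 1)) ^ n :=
          tsum_congr fun n => by rw [pow_succ' ρ (i + 1), mul_pow]; ring
      _ ≤ c * (ρ ^ (i + 1) / (1 - ρ ^ (i + 1)) ^ 2) :=
          tsum_coe_mul_mul_pow_le (fun n => by have := hb n; positivity) hc (by positivity) hq1
      _ ≤ G i := by
          rw [show G i = c * (ρ ^ (i + 1) / (1 - ρ) ^ 2) by simp only [G]; ring]
          gcongr
  have hG : HasSum G (c * ρ / (1 - ρ) ^ 2 * (1 - ρ)⁻¹) :=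
    (hasSum_geometric_of_lt_one hρ0 hρ1).mul_left _
  have hnonneg (i : ℕ) : 0 ≤ ∑' n : ℕ, n * b n * (ρ ^ (i + 2)) ^ n :=
    tsum_nonneg fun n => by have := hb n; positivity
  calc sTail b ρ ≤ ∑' i, G i :=
        (hG.summable.of_nonneg_of_le hnonneg hinner).tsum_le_tsum hinner hG.summable
    _ = c * ρ / (1 - ρ) ^ 3 := by rw [hG.tsum_eq, ← div_eq_mul_inv, div_div, ← pow_succ]

namespace KTreeSeriesEq

variable {k : ℕ} {b : ℕ → ℝ} {ρ : ℝ}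

lemma radius_le_half (heq : KTreeSeriesEq k b) (hb0 : b 0 = 0) (hb : ∀ n, 0 ≤ b n) (hρ : 0 < ρ)
    (hsum : ∀ x, 0 ≤ x → x < ρ → Summable fun n => b n * x ^ n) (hk : 3 ≤ k) : ρ ≤ 1 / 2 := by
  have h2 := heq.sq_div_two_mul_mul_pow_le_one hb0 hb hρ hsum 2
  rw [heq.coeff_two hb0] at h2
  have hk' : (3 : ℝ) ≤ k := by exact_mod_cast hk
  by_contra! hρ2
  have : (1 / 2 : ℝ) ^ 3 < ρ ^ 3 := by gcongr
  have : (27 : ℝ) ≤ k ^ 2 * k := by nlinarith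
  nlinarith

lemma sq_mul_sTail_le (heq : KTreeSeriesEq k b) (hk : 1 ≤ k) (hb0 : b 0 = 0)
    (hb : ∀ n, 0 ≤ b n) (hρ0 : 0 < ρ) (hρ1 : ρ < 1)
    (hsum : ∀ x, 0 ≤ x → x < ρ → Summable fun n => b n * x ^ n) :
    (k : ℝ) ^ 2 * sTail b ρ ≤ 2 / (1 - ρ) ^ 3 := by
  have hk0 : (0 : ℝ) < k := by exact_mod_cast hk
  have hcoeff (n : ℕ) : b n * ρ ^ n ≤ 2 / (k ^ 2 * ρ) := by
    have := heq.sq_div_two_mul_mul_pow_le_one hb0 hb hρ0 hsum n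
    rw [le_div_iff₀ (by positivity)]
    linarith [show b n * ρ ^ n * (k ^ 2 * ρ) = 2 * ((k : ℝ) ^ 2 / 2 * b n * ρ ^ (n + 1)) by ring]
  have h1ρ : 0 < 1 - ρ := by linarith
  calc (k : ℝ) ^ 2 * sTail b ρ ≤ k ^ 2 * (2 / (k ^ 2 * ρ) * ρ / (1 - ρ) ^ 3) := by
        gcongr
        exact sTail_le hb hρ0.le hρ1 hcoeff
    _ = 2 / (1 - ρ) ^ 3 := by field_simp

end KTreeSeriesEq

lemma abs_mul_sqrt_one_add_sub_le {a t : ℝ} (ha : 0 ≤ a) (ht : 0 ≤ t) :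
    |a * √(1 + t) - a| ≤ a * (t / 2) := by
  have hlow : 1 ≤ √(1 + t) := Real.one_le_sqrt.mpr (by linarith)
  have hup : √(1 + t) ≤ 1 + t / 2 :=
    Real.sqrt_le_iff.mpr ⟨by positivity, by nlinarith⟩
  rw [abs_of_nonneg (by nlinarith)]
  nlinarith

lemma abs_cConst_sub_le {k : ℕ} {b : ℕ → ℝ} {ρ M : ℝ} (hk : 1 ≤ k) (hs : 0 ≤ sTail b ρ)
    (hM : (k : ℝ) ^ 2 * sTail b ρ ≤ M) :
    |cConst k b ρ - k * ∑ i ∈ Finset.range k, (1 : ℝ) / (i + 1)| ≤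
      (M / 2 / k) * (k * ∑ i ∈ Finset.range k, (1 : ℝ) / (i + 1)) := by
  have hk0 : (0 : ℝ) < k := by exact_mod_cast hk
  have hH : 0 ≤ (k : ℝ) * ∑ i ∈ Finset.range k, (1 : ℝ) / (i + 1) := by positivity
  calc _ ≤ (k * ∑ i ∈ Finset.range k, (1 : ℝ) / (i + 1)) * (k * sTail b ρ / 2) :=
        abs_mul_sqrt_one_add_sub_le hH (by positivity)
    _ ≤ _ := by
        rw [mul_comm]
        refine mul_le_mul_of_nonneg_right ?_ hH
        rw [le_div_iff₀ hk0]
        nlinarith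

theorem statement12 (b : ℕ → ℕ → ℝ) (ρ : ℕ → ℝ)
    (h : ∀ k : ℕ, 1 ≤ k →
      b k 0 = 0 ∧ (∀ n, 0 ≤ b k n) ∧ KTreeSeriesEq k (b k) ∧
        0 < ρ k ∧ ρ k < 1 ∧ IsRadius (b k) (ρ k)) :
    ∃ C > (0 : ℝ), ∀ k : ℕ, 1 ≤ k →
      |cConst k (b k) (ρ k) - (k : ℝ) * ∑ i ∈ Finset.range k, (1 : ℝ) / (i + 1)| ≤
        (C / k) * ((k : ℝ) * ∑ i ∈ Finset.range k, (1 : ℝ) / (i + 1)) := by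
  have hs (k : ℕ) (hk : 1 ≤ k) : 0 ≤ sTail (b k) (ρ k) :=
    sTail_nonneg (h k hk).2.1 (h k hk).2.2.2.1.le
  have hs₁ := hs 1 le_rfl
  have hs₂ := hs 2 one_le_two
  -- `16 = 2 / (1/2)³` serves `k ≥ 3`, where `ρ k ≤ 1/2`; the other terms serve `k = 1, 2`.
  set M : ℝ := 16 + sTail (b 1) (ρ 1) + 4 * sTail (b 2) (ρ 2)
  refine ⟨M / 2, by positivity, fun k hk => abs_cConst_sub_le hk (hs k hk) ?_⟩
  obtain rfl | rfl | hk3 : k = 1 ∨ k = 2 ∨ 3 ≤ k := by omega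
  · norm_num [M]; linarith
  · norm_num [M]; linarith
  obtain ⟨hb0, hb, heq, hρ0, -, hr⟩ := h k hk
  have hρ := heq.radius_le_half hb0 hb hρ0 hr.1 hk3
  calc (k : ℝ) ^ 2 * sTail (b k) (ρ k) ≤ 2 / (1 - ρ k) ^ 3 :=
        heq.sq_mul_sTail_le hk hb0 hb hρ0 (by linarith) hr.1
    _ ≤ 2 / (1 / 2) ^ 3 := by gcongr; linarith
    _ ≤ M := by norm_num [M]; linarith
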